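/- arXiv:2401.12935 — 2 statements merged into one kernel-verified Lean document; each statement's English description precedes it below -/
import Mathlib

section
/- Let R be a commutative unital ring, and f_1, …, f_n distinct elements of R, with the notation η, min, max as in the appendix lemma. Then: (1) if n ≥ 2, ∑_{B⊆F, max(B)=f_n} η(B) = (f_n − f_{n−1}) · ∏_{j=2}^{n−1} (f_j − f_{j−1} + 1); (2) if n ≥ 3, ∑_{B⊆F, min(B)=f_1, max(B)=f_n} η(B) = (f_2 − f_1)(f_n − f_{n−1}) · ∏_{j=3}^{n−1} (f_j − f_{j−1} + 1). (Empty products equal 1.) -/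
/-!
Let `S_f(a, n)` be the sum of `η_f(B)` over the subsets `B ⊆ [a, n]` with maximum `n`. Splitting
these subsets according to whether they contain `n - 1` gives
`S_f(a, n) = S_{f'}(a, n - 1) + (f n - f (n - 1) - 1) S_f(a, n - 1)`, where `f'` agrees with `f`
except that `f' (n - 1) = f n`: replacing the top element `n` by `n - 1` and moving the value
`f n` along does not change `η` of a set avoiding `n - 1`. Since the recursion changes `f`, the
product formula for `S_f(a, n)` is proved by induction on `n` for all `f` at once. The sum over
the subsets with minimum `1` and maximum `n` is `S_f(1, n) - S_f(2, n)`, and injectivity of `f`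
turns the conditions `f (min B) = f 1`, `f (max B) = f n` into `1 ∈ B`, `n ∈ B`.
-/

variable {R : Type*} [CommRing R]

/-- η of a subset of indices B = {i₁ < … < i_k} relative to the family f :
∏_{j=1}^{k−1} (f i_{j+1} − f i_j − 1), equal to 1 when k ≤ 1. -/
def etaOf (f : ℕ → R) (B : Finset ℕ) : R :=
  (((B.sort (· ≤ ·)).zip (B.sort (· ≤ ·)).tail).map
    (fun p => f p.2 - f p.1 - 1)).prod

open Finset

theorem List.zip_tail_append_singleton {α : Type*} :
    ∀ {l : List α} (hl : l ≠ []) (a : α),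
      (l ++ [a]).zip (l ++ [a]).tail = l.zip l.tail ++ [(l.getLast hl, a)]
  | [_], _, _ => rfl
  | x :: y :: t, _, a =>
    congrArg ((x, y) :: ·) (List.zip_tail_append_singleton (List.cons_ne_nil y t) a)

theorem Finset.sort_insert_of_forall_lt {α : Type*} [LinearOrder α] {s : Finset α} {a : α}
    (h : ∀ b ∈ s, b < a) : (insert a s).sort (· ≤ ·) = s.sort (· ≤ ·) ++ [a] := by
  have hlt : ∀ b ∈ s.sort (· ≤ ·), ∀ c ∈ [a], b < c := fun b hb c hc => by
    rw [List.mem_singleton.mp hc]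
    exact h b ((mem_sort _).mp hb)
  have hnodup : (s.sort (· ≤ ·) ++ [a]).Nodup := List.nodup_append.mpr
    ⟨s.sort_nodup _, List.nodup_singleton a, fun b hb c hc => (hlt b hb c hc).ne⟩
  have hsorted : (s.sort (· ≤ ·) ++ [a]).Pairwise (· ≤ ·) := List.pairwise_append.mpr
    ⟨s.pairwise_sort _, List.pairwise_singleton _ a, fun b hb c hc => (hlt b hb c hc).le⟩
  have hset : insert a s = (s.sort (· ≤ ·) ++ [a]).toFinset := by
    ext; simp
  rw [hset]
  exact (List.toFinset_sort _ hnodup).mpr hsorted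

theorem etaOf_singleton (f : ℕ → R) (a : ℕ) : etaOf f {a} = 1 := by
  simp [etaOf]

theorem etaOf_congr {f g : ℕ → R} {B : Finset ℕ} (h : ∀ x ∈ B, f x = g x) :
    etaOf f B = etaOf g B := by
  unfold etaOf
  congr 1
  refine List.map_congr_left fun p hp => ?_
  obtain ⟨h₁, h₂⟩ := List.of_mem_zip hp
  rw [h p.1 (by simpa using h₁), h p.2 (by simpa using List.mem_of_mem_tail h₂)]

theorem etaOf_insert_of_forall_lt (f : ℕ → R) {C : Finset ℕ} (hC : C.Nonempty) {n : ℕ}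
    (h : ∀ x ∈ C, x < n) :
    etaOf f (insert n C) = etaOf f C * (f n - f (C.max' hC) - 1) := by
  have hne : C.sort (· ≤ ·) ≠ [] := by simpa [← List.length_pos_iff] using hC.card_pos
  rw [etaOf, sort_insert_of_forall_lt h, List.zip_tail_append_singleton hne,
    List.map_append, List.prod_append, etaOf, max'_eq_sorted_last, List.getLast_eq_getElem]
  simp

theorem etaOf_insert_eq_update (f : ℕ → R) {D : Finset ℕ} {m n : ℕ}
    (hD : ∀ x ∈ D, x < m) (hmn : m < n) :
    etaOf f (insert n D) = etaOf (Function.update f m (f n)) (insert m D) := by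
  rcases D.eq_empty_or_nonempty with rfl | hne
  · simp [etaOf_singleton]
  · have hfD : ∀ x ∈ D, f x = Function.update f m (f n) x :=
      fun x hx => (Function.update_of_ne (hD x hx).ne _ _).symm
    rw [etaOf_insert_of_forall_lt _ hne hD, etaOf_insert_of_forall_lt f hne
      (fun x hx => (hD x hx).trans hmn), etaOf_congr hfD, Function.update_self,
      hfD _ (D.max'_mem hne)]

def etaSumMax (f : ℕ → R) (a n : ℕ) : R :=
  ∑ B ∈ (Icc a n).powerset with n ∈ B, etaOf f B

theorem etaSumMax_eq_sum_insert (f : ℕ → R) {a n : ℕ} (h : a ≤ n) :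
    etaSumMax f a n = ∑ D ∈ (Ico a n).powerset, etaOf f (insert n D) := by
  rw [etaSumMax, sum_filter, ← Ico_insert_right h, sum_powerset_insert right_notMem_Ico]
  have hnone : ∀ t ∈ (Ico a n).powerset, n ∉ t :=
    fun t ht => notMem_of_mem_powerset_of_notMem ht right_notMem_Ico
  simp +contextual [hnone]

theorem etaSumMax_self (f : ℕ → R) (a : ℕ) : etaSumMax f a a = 1 := by
  simp [etaSumMax_eq_sum_insert f le_rfl, etaOf_singleton]

theorem etaSumMax_add_one (f : ℕ → R) {a m : ℕ} (h : a ≤ m) :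
    etaSumMax f a (m + 1) = etaSumMax (Function.update f m (f (m + 1))) a m
      + (f (m + 1) - f m - 1) * etaSumMax f a m := by
  have hlt : ∀ D ∈ (Ico a m).powerset, ∀ x ∈ D, x < m :=
    fun D hD x hx => (mem_Ico.mp (mem_powerset.mp hD hx)).2
  rw [etaSumMax_eq_sum_insert f (by omega), ← insert_Ico_right_eq_Ico_add_one h,
    sum_powerset_insert right_notMem_Ico, etaSumMax_eq_sum_insert f h,
    etaSumMax_eq_sum_insert _ h, mul_sum]
  congr 1
  · exact sum_congr rfl fun D hD => etaOf_insert_eq_update f (hlt D hD) (by omega)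
  · refine sum_congr rfl fun D hD => ?_
    have hmax : (insert m D).max' (insert_nonempty m D) = m :=
      (max'_eq_iff _ _ _).mpr
        ⟨mem_insert_self m D, by simpa using fun x hx => (hlt D hD x hx).le⟩
    rw [etaOf_insert_of_forall_lt f (insert_nonempty m D)
      (by simpa using fun x hx => (hlt D hD x hx).le), hmax, mul_comm]

theorem etaSumMax_add_one_eq_prod (f : ℕ → R) {a m : ℕ} (h : a ≤ m) :
    etaSumMax f a (m + 1) = (f (m + 1) - f m) * ∏ j ∈ Icc (a + 1) m, (f j - f (j - 1) + 1) := by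
  induction m, h using Nat.le_induction generalizing f with
  | base =>
    rw [etaSumMax_add_one f le_rfl, etaSumMax_self, etaSumMax_self, Icc_eq_empty (by omega),
      prod_empty]
    ring
  | succ m hm ih =>
    have hprod : ∏ j ∈ Icc (a + 1) m, (Function.update f (m + 1) (f (m + 1 + 1)) j
          - Function.update f (m + 1) (f (m + 1 + 1)) (j - 1) + 1)
        = ∏ j ∈ Icc (a + 1) m, (f j - f (j - 1) + 1) := by
      refine prod_congr rfl fun j hj => ?_
      have hj := (mem_Icc.mp hj).2
      rw [Function.update_of_ne (by omega), Function.update_of_ne (by omega)]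
    rw [etaSumMax_add_one f (by omega), ih, ih, hprod, prod_Icc_succ_top (by omega),
      Nat.add_sub_cancel, Function.update_self, Function.update_of_ne (by omega)]
    ring

theorem Finset.sum_powerset_Icc_filter_mem_left_mem_right {M : Type*} [AddCommGroup M]
    (g : Finset ℕ → M) (a n : ℕ) :
    ∑ B ∈ (Icc a n).powerset with a ∈ B ∧ n ∈ B, g B =
      ∑ B ∈ (Icc a n).powerset with n ∈ B, g B
        - ∑ B ∈ (Icc (a + 1) n).powerset with n ∈ B, g B := by
  rw [eq_sub_iff_add_eq, ← sum_filter_add_sum_filter_not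
    ((Icc a n).powerset.filter (fun B => n ∈ B)) (fun B => a ∈ B)]
  simp only [filter_filter]
  congr 1
  · exact sum_congr (filter_congr fun _ _ => and_comm) fun _ _ => rfl
  · refine sum_congr ?_ fun _ _ => rfl
    ext B
    simp only [mem_filter, mem_powerset, subset_iff, mem_Icc]
    grind

theorem Set.InjOn.apply_max'_eq_iff {α β : Type*} [LinearOrder α] {f : α → β}
    {s B : Finset α} (hf : Set.InjOn f s) (hB : B ⊆ s) {n : α} (hn : n ∈ s)
    (hmax : ∀ x ∈ s, x ≤ n) (hne : B.Nonempty) : f (B.max' hne) = f n ↔ n ∈ B := by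
  rw [hf.eq_iff (hB (B.max'_mem hne)) hn, max'_eq_iff]
  exact ⟨And.left, fun h => ⟨h, fun b hb => hmax b (hB hb)⟩⟩

theorem Set.InjOn.apply_min'_eq_iff {α β : Type*} [LinearOrder α] {f : α → β}
    {s B : Finset α} (hf : Set.InjOn f s) (hB : B ⊆ s) {n : α} (hn : n ∈ s)
    (hmin : ∀ x ∈ s, n ≤ x) (hne : B.Nonempty) : f (B.min' hne) = f n ↔ n ∈ B := by
  rw [hf.eq_iff (hB (B.min'_mem hne)) hn, min'_eq_iff]
  exact ⟨And.left, fun h => ⟨h, fun b hb => hmin b (hB hb)⟩⟩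

theorem Finset.sum_attach_powerset_ne_empty_ite {α M : Type*} [DecidableEq α] [AddCommMonoid M]
    (s : Finset α) (P : s.powerset.filter (· ≠ ∅) → Prop) [DecidablePred P]
    (p : Finset α → Prop) [DecidablePred p] (hP : ∀ B, P B ↔ p B.1)
    (hp : ∀ B, p B → B ≠ ∅) (g : Finset α → M) :
    ∑ B ∈ (s.powerset.filter (· ≠ ∅)).attach, (if P B then g B.1 else 0) =
      ∑ B ∈ s.powerset with p B, g B := by
  calc _ = ∑ B ∈ (s.powerset.filter (· ≠ ∅)).attach, (if p B.1 then g B.1 else 0) :=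
        sum_congr rfl fun B _ => if_congr (hP B) rfl rfl
    _ = ∑ B ∈ s.powerset.filter (· ≠ ∅), if p B then g B else 0 :=
        sum_attach _ fun B => if p B then g B else 0
    _ = _ := by
      rw [← sum_filter, filter_filter]
      exact sum_congr (filter_congr fun B _ => ⟨And.right, fun h => ⟨hp B h, h⟩⟩)
        fun _ _ => rfl

/-- appendix constrained summation identities. Let f₁, …, fₙ be
distinct elements of a commutative unital ring and F = {f₁,…,fₙ}. Then
(1) if n ≥ 2, ∑_{B⊆F, max(B)=fₙ} η(B) = (fₙ − f_{n−1}) ∏_{j=2}^{n−1} (f_j − f_{j−1} + 1);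
(2) if n ≥ 3, ∑_{B⊆F, min(B)=f₁, max(B)=fₙ} η(B)
      = (f₂ − f₁)(fₙ − f_{n−1}) ∏_{j=3}^{n−1} (f_j − f_{j−1} + 1). -/
theorem appendix_constrained_summation_identities [DecidableEq R]
    (n : ℕ) (f : ℕ → R) (hf : Set.InjOn f (Set.Icc 1 n)) :
    (2 ≤ n →
      ∑ B ∈ ((Finset.Icc 1 n).powerset.filter (fun B => B ≠ ∅)).attach,
        (if f (B.1.max' (Finset.nonempty_iff_ne_empty.mpr
              (Finset.mem_filter.mp B.2).2)) = f n
         then etaOf f B.1 else 0)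
      = (f n - f (n-1)) * ∏ j ∈ Finset.Icc 2 (n-1), (f j - f (j-1) + 1)) ∧
    (3 ≤ n →
      ∑ B ∈ ((Finset.Icc 1 n).powerset.filter (fun B => B ≠ ∅)).attach,
        (if f (B.1.min' (Finset.nonempty_iff_ne_empty.mpr
              (Finset.mem_filter.mp B.2).2)) = f 1 ∧
            f (B.1.max' (Finset.nonempty_iff_ne_empty.mpr
              (Finset.mem_filter.mp B.2).2)) = f n
         then etaOf f B.1 else 0)
      = (f 2 - f 1) * (f n - f (n-1)) *
          ∏ j ∈ Finset.Icc 3 (n-1), (f j - f (j-1) + 1)) := by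
  rw [← coe_Icc] at hf
  have hsub (B : (Icc 1 n).powerset.filter (· ≠ ∅)) : B.1 ⊆ Icc 1 n :=
    mem_powerset.mp (mem_filter.mp B.2).1
  have hmax (B) (hn : 1 ≤ n) := hf.apply_max'_eq_iff (hsub B) (right_mem_Icc.mpr hn)
    (fun x hx => (mem_Icc.mp hx).2)
  have hmin (B) (hn : 1 ≤ n) := hf.apply_min'_eq_iff (hsub B) (left_mem_Icc.mpr hn)
    (fun x hx => (mem_Icc.mp hx).1)
  refine ⟨fun hn => ?_, fun hn => ?_⟩ <;>
    obtain ⟨m, rfl⟩ : ∃ m, n = m + 1 := ⟨n - 1, by omega⟩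
  · rw [sum_attach_powerset_ne_empty_ite _ _ (fun B => m + 1 ∈ B) (fun B => hmax B (by omega) _)
      (fun B hB => ne_empty_of_mem hB), ← etaSumMax, etaSumMax_add_one_eq_prod f (by omega)]
    simp
  · rw [sum_attach_powerset_ne_empty_ite _ _ (fun B => 1 ∈ B ∧ m + 1 ∈ B)
      (fun B => and_congr (hmin B (by omega) _) (hmax B (by omega) _))
      (fun B hB => ne_empty_of_mem hB.1), sum_powerset_Icc_filter_mem_left_mem_right,
      ← etaSumMax, ← etaSumMax, etaSumMax_add_one_eq_prod f (a := 1) (by omega),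
      etaSumMax_add_one_eq_prod f (a := 1 + 1) (by omega),
      ← insert_Icc_add_one_left_eq_Icc (a := 1 + 1) (by omega), prod_insert (by simp)]
    simp only [Nat.add_sub_cancel, Nat.reduceAdd]
    ring
end

section
/- Let A be an admissible set of integers, i.e. A is finite, nonempty, and either A ⊆ 2ℤ or A ⊆ 2ℤ+1. Let [A] := (A−1) ∪ (A+1). Then 3^{|A|} · η(A) = η⁺([A]). -/
/-- η of a finite set of integers c₁ < c₂ < … < c_ℓ : the product
∏_{i=1}^{ℓ−1} (c_{i+1} − c_i − 1), equal to 1 when ℓ ≤ 1. -/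
def eta (F : Finset ℤ) : ℤ :=
  (((F.sort (· ≤ ·)).zip (F.sort (· ≤ ·)).tail).map (fun p => p.2 - p.1 - 1)).prod

/-- η⁺ of a finite set of integers c₁ < c₂ < … < c_ℓ : the product
∏_{i=1}^{ℓ−1} (c_{i+1} − c_i + 1), equal to 1 when ℓ ≤ 1. -/
def etaPlus (F : Finset ℤ) : ℤ :=
  (((F.sort (· ≤ ·)).zip (F.sort (· ≤ ·)).tail).map (fun p => p.2 - p.1 + 1)).prod

/-- A set of integers is admissible if it is finite, nonempty, and consists only of
even integers or only of odd integers. -/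
def Admissible (A : Finset ℤ) : Prop :=
  A.Nonempty ∧ ((∀ a ∈ A, Even a) ∨ (∀ a ∈ A, Odd a))

/-!
All elements of an admissible `A` have the same parity, so no two of them are adjacent. Induct on the
least element: adding a new minimum `a` below `m = min A`, where `m - a ≥ 2`, multiplies `η` by the
gap factor `m - a - 1`, and adds `a - 1`, `a + 1` to `[A]` below `m - 1 = min [A]`. If `a + 1 = m - 1`
this creates the single new gap factor `3` of `η⁺`, otherwise the two factors `3` and `m - a - 1`;
in both cases each side of the identity gets multiplied by `3 (m - a - 1)`.
-/

section GapProd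

variable {α M : Type*} [LinearOrder α] [Monoid M]

def gapProd (f : α × α → M) (s : Finset α) : M :=
  (((s.sort (· ≤ ·)).zip (s.sort (· ≤ ·)).tail).map f).prod

@[simp]
theorem gapProd_empty (f : α × α → M) : gapProd f ∅ = 1 := by
  simp [gapProd]

@[simp]
theorem gapProd_singleton (f : α × α → M) (a : α) : gapProd f {a} = 1 := by
  simp [gapProd]

theorem gapProd_insert_of_lt (f : α × α → M) {s : Finset α} {a m : α} (hm : m ∈ s)
    (hmin : ∀ b ∈ s, m ≤ b) (ham : a < m) :
    gapProd f (insert a s) = f (a, m) * gapProd f s := by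
  have ha : ∀ b ∈ s, a ≤ b := fun b hb => (ham.trans_le (hmin b hb)).le
  have hsort : s.sort (· ≤ ·) = m :: (s.erase m).sort (· ≤ ·) := by
    conv_lhs => rw [← Finset.insert_erase hm]
    exact Finset.sort_insert _ (fun b hb => hmin b (Finset.mem_of_mem_erase hb))
      (Finset.notMem_erase m s)
  rw [gapProd, gapProd, Finset.sort_insert _ ha fun has => (ham.trans_le (hmin a has)).false,
    hsort]
  simp

end GapProd

theorem eta_eq_gapProd (s : Finset ℤ) : eta s = gapProd (fun p => p.2 - p.1 - 1) s := rfl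

theorem etaPlus_eq_gapProd (s : Finset ℤ) : etaPlus s = gapProd (fun p => p.2 - p.1 + 1) s := rfl

theorem eta_insert_of_lt {s : Finset ℤ} {a m : ℤ} (hm : m ∈ s) (hmin : ∀ b ∈ s, m ≤ b)
    (ham : a < m) : eta (insert a s) = (m - a - 1) * eta s :=
  gapProd_insert_of_lt _ hm hmin ham

def bracket (A : Finset ℤ) : Finset ℤ := A.image (· - 1) ∪ A.image (· + 1)

theorem mem_bracket {A : Finset ℤ} {x : ℤ} : x ∈ bracket A ↔ x + 1 ∈ A ∨ x - 1 ∈ A := by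
  simp only [bracket, Finset.mem_union, Finset.mem_image]
  constructor
  · rintro (⟨a, ha, rfl⟩ | ⟨a, ha, rfl⟩) <;> simp [ha]
  · rintro (h | h)
    · exact Or.inl ⟨x + 1, h, by ring⟩
    · exact Or.inr ⟨x - 1, h, by ring⟩

@[simp]
theorem bracket_empty : bracket ∅ = ∅ := rfl

theorem bracket_insert (a : ℤ) (A : Finset ℤ) :
    bracket (insert a A) = insert (a - 1) (insert (a + 1) (bracket A)) := by
  simp only [bracket, Finset.image_insert, Finset.insert_union, Finset.union_insert]
  exact Finset.insert_comm _ _ _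

theorem sub_one_le_of_mem_bracket {A : Finset ℤ} {m : ℤ} (hmin : ∀ b ∈ A, m ≤ b) :
    ∀ x ∈ bracket A, m - 1 ≤ x := by
  intro x hx
  rcases mem_bracket.1 hx with h | h
  · linarith [hmin _ h]
  · linarith [hmin _ h]

theorem etaPlus_bracket_singleton (a : ℤ) : etaPlus (bracket {a}) = 3 := by
  rw [← insert_empty_eq, bracket_insert, bracket_empty, insert_empty_eq, etaPlus_eq_gapProd,
    gapProd_insert_of_lt _ (Finset.mem_singleton_self _) (by simp) (by omega), gapProd_singleton]
  ring

theorem etaPlus_bracket_insert_of_lt {s : Finset ℤ} {a m : ℤ} (hm : m ∈ s)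
    (hmin : ∀ b ∈ s, m ≤ b) (ham : a + 2 ≤ m) :
    etaPlus (bracket (insert a s)) = 3 * (m - a - 1) * etaPlus (bracket s) := by
  have hm' : m - 1 ∈ bracket s := mem_bracket.2 (Or.inl (by simpa using hm))
  have hmin' := sub_one_le_of_mem_bracket hmin
  rw [bracket_insert, etaPlus_eq_gapProd, etaPlus_eq_gapProd]
  set G := gapProd (fun p : ℤ × ℤ => p.2 - p.1 + 1) (bracket s)
  rcases ham.eq_or_lt with hcoll | hlt
  · rw [show a + 1 = m - 1 by omega, Finset.insert_eq_of_mem hm',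
      gapProd_insert_of_lt _ hm' hmin' (by omega)]
    linear_combination 2 * G * hcoll
  · have hmin'' : ∀ b ∈ insert (a + 1) (bracket s), a + 1 ≤ b := by
      simp only [Finset.mem_insert, forall_eq_or_imp, le_refl, true_and]
      exact fun b hb => by linarith [hmin' b hb]
    rw [gapProd_insert_of_lt _ (Finset.mem_insert_self _ _) hmin'' (by omega),
      gapProd_insert_of_lt _ hm' hmin' (by omega)]
    ring

theorem three_pow_card_mul_eta_eq_etaPlus_bracket (A : Finset ℤ)
    (hsep : ∀ a ∈ A, a + 1 ∉ A) : 3 ^ A.card * eta A = etaPlus (bracket A) := by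
  induction A using Finset.induction_on_min with
  | empty => simp [eta_eq_gapProd, etaPlus_eq_gapProd]
  | insert a s hlt ih =>
    have ha : a ∉ s := fun has => (hlt a has).false
    rcases s.eq_empty_or_nonempty with rfl | hs
    · simp [etaPlus_bracket_singleton, eta_eq_gapProd]
    have hm := s.min'_mem hs
    have hmin : ∀ b ∈ s, s.min' hs ≤ b := fun b hb => s.min'_le b hb
    have hgap : a + 2 ≤ s.min' hs := by
      have hne : a + 1 ≠ s.min' hs := fun h =>
        hsep a (Finset.mem_insert_self a s) (h ▸ Finset.mem_insert_of_mem hm)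
      have := hlt _ hm
      omega
    have ih := ih fun b hb hb1 =>
      hsep b (Finset.mem_insert_of_mem hb) (Finset.mem_insert_of_mem hb1)
    rw [Finset.card_insert_of_notMem ha, eta_insert_of_lt hm hmin (hlt _ hm),
      etaPlus_bracket_insert_of_lt hm hmin hgap, ← ih]
    ring

theorem Admissible.add_one_notMem {A : Finset ℤ} (hA : Admissible A) :
    ∀ a ∈ A, a + 1 ∉ A := by
  intro a ha ha1
  rcases hA.2 with h | h
  · exact Int.not_even_iff_odd.2 ((h a ha).add_one) (h (a + 1) ha1)
  · exact Int.not_odd_iff_even.2 ((h a ha).add_one) (h (a + 1) ha1)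

/-- For any admissible set A, with [A] = (A−1) ∪ (A+1), one has
3^{|A|} · η(A) = η⁺([A]). -/
theorem three_pow_eta_eq_etaPlus (A : Finset ℤ) (hA : Admissible A) :
    (3 : ℤ) ^ A.card * eta A = etaPlus (A.image (· - 1) ∪ A.image (· + 1)) :=
  three_pow_card_mul_eta_eq_etaPlus_bracket A hA.add_one_notMem
end
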